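/- arXiv:0709.3185 — 2 statements merged into one kernel-verified Lean document; each statement's English description precedes it below -/
import Mathlib

section
/- Let G be a finite p-group of class 2 with G = ⟨a,b,c⟩, G' = ⟨[a,b]⟩ × ⟨[a,c]⟩ × ⟨[b,c]⟩ where each factor has order p^t, and G' = Z(G). Then for each g ∈ {a,b,c}, the centralizer C_G(g) equals ⟨g⟩Z(G). -/
/-!
In class two, `x ↦ ⁅g, x⁆` is a homomorphism that kills `Z(G)`. If `x` centralises `a` and
`x ≡ a^i b^j c^k` modulo `Z(G)`, applying it gives `⁅a, b⁆^j ⁅a, c⁆^k = 1`. Since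
`|G'| = p^(3t)` is the product of the orders of the three generating commutators, the cyclic
factors of `G'` are independent, so `⁅a, b⁆^j = ⁅a, c⁆^k = 1`. Hence `p^t` divides `j` and `k`,
so `b^j` and `c^k` are central and `x ∈ ⟨a⟩Z(G)`; `b` and `c` are handled in the same way.
-/

open scoped commutatorElement

namespace Subgroup

variable {G : Type*} [Group G] {H K L : Subgroup G}

def prodMulHom (hHK : H ≤ centralizer K) : H × K →* G :=
  H.subtype.noncommCoprod K.subtype fun h k ↦
    show Commute (H.subtype h) (K.subtype k) from (mem_centralizer_iff.mp (hHK h.2) k k.2).symm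

theorem range_prodMulHom (hHK : H ≤ centralizer K) : (prodMulHom hHK).range = H ⊔ K := by
  rw [prodMulHom, MonoidHom.noncommCoprod_range, range_subtype, range_subtype]

theorem injective_prodMulHom_iff (hHK : H ≤ centralizer K) :
    Function.Injective (prodMulHom hHK) ↔ Disjoint H K := by
  simp [prodMulHom, MonoidHom.noncommCoprod_injective]

variable [Finite G]

theorem card_sup_le_mul (hHK : H ≤ centralizer K) :
    Nat.card ↥(H ⊔ K) ≤ Nat.card H * Nat.card K := by
  rw [← range_prodMulHom hHK, ← Nat.card_prod]
  exact Nat.card_le_card_of_surjective _ (prodMulHom hHK).rangeRestrict_surjective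

theorem disjoint_of_card_sup_eq_mul (hHK : H ≤ centralizer K)
    (hcard : Nat.card ↥(H ⊔ K) = Nat.card H * Nat.card K) : Disjoint H K := by
  rw [← range_prodMulHom hHK, ← Nat.card_prod] at hcard
  rw [← injective_prodMulHom_iff hHK, ← MonoidHom.rangeRestrict_injective_iff]
  exact ((Nat.bijective_iff_surjective_and_card _).mpr
    ⟨(prodMulHom hHK).rangeRestrict_surjective, hcard.symm⟩).1

theorem disjoint_of_card_sup_sup_eq_mul_mul (hHK : H ≤ centralizer K) (hHL : H ≤ centralizer L)
    (hKL : K ≤ centralizer L)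
    (hcard : Nat.card ↥(H ⊔ K ⊔ L) = Nat.card H * Nat.card K * Nat.card L) :
    Disjoint H K ∧ Disjoint H L ∧ Disjoint K L := by
  have hHKL : H ⊔ K ≤ centralizer L := sup_le hHL hKL
  -- `|H ⊔ K ⊔ L| ≤ |H ⊔ K| |L| ≤ |H| |K| |L|`, so both inequalities are equalities.
  have hle := card_sup_le_mul hHK
  have hle' := card_sup_le_mul hHKL
  have hHK_card : Nat.card ↥(H ⊔ K) = Nat.card H * Nat.card K := by
    have := Nat.card_pos (α := L)
    nlinarith
  have hdisj := disjoint_of_card_sup_eq_mul hHKL (by rw [hHK_card]; exact hcard)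
  exact ⟨disjoint_of_card_sup_eq_mul hHK hHK_card, hdisj.mono_left le_sup_left,
    hdisj.mono_left le_sup_right⟩

theorem mem_closure_triple {C : Type*} [CommGroup C] {x y z w : C} :
    w ∈ closure ({x, y, z} : Set C) ↔ ∃ i j k : ℤ, x ^ i * y ^ j * z ^ k = w := by
  rw [← Set.singleton_union, closure_union, mem_sup]
  simp_rw [mem_closure_singleton, mem_closure_pair, exists_exists_eq_and]
  constructor
  · rintro ⟨i, _, ⟨j, k, rfl⟩, rfl⟩
    exact ⟨i, j, k, mul_assoc _ _ _⟩
  · rintro ⟨i, j, k, rfl⟩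
    exact ⟨i, _, ⟨j, k, rfl⟩, (mul_assoc _ _ _).symm⟩

end Subgroup

open Subgroup

section ClassTwo

variable {G : Type*} [Group G]

theorem QuotientGroup.exists_zpow_mul_zpow_mul_zpow_eq {N : Subgroup G} [N.Normal]
    (hN : commutator G ≤ N) {x y z : G} (hgen : closure ({x, y, z} : Set G) = ⊤) (w : G) :
    ∃ i j k : ℤ, ((x ^ i * y ^ j * z ^ k : G) : G ⧸ N) = w := by
  let _ : CommGroup (G ⧸ N) :=
    { mul_comm := (Subgroup.Normal.quotient_commutative_iff_commutator_le.mpr hN).is_comm.comm }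
  have htop : closure ({(x : G ⧸ N), (y : G ⧸ N), (z : G ⧸ N)} : Set (G ⧸ N)) = ⊤ := by
    rw [← map_top_of_surjective _ (QuotientGroup.mk'_surjective N), ← hgen,
      MonoidHom.map_closure]
    simp [Set.image_insert_eq]
  simpa using mem_closure_triple.mp (htop ▸ mem_top (w : G ⧸ N))

theorem commutatorElement_mem_center (hG : commutator G ≤ center G) (x y : G) :
    ⁅x, y⁆ ∈ center G :=
  hG (commutator_mem_commutator (mem_top x) (mem_top y))

def commutatorElementHom (hG : commutator G ≤ center G) (g : G) : G →* G where
  toFun x := ⁅g, x⁆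
  map_one' := commutatorElement_one_right g
  map_mul' x y := by
    have hy : x * ⁅g, y⁆ = ⁅g, y⁆ * x := mem_center_iff.mp (commutatorElement_mem_center hG g y) x
    calc ⁅g, x * y⁆ = ⁅g, x⁆ * (x * ⁅g, y⁆ * x⁻¹) := by simp only [commutatorElement_def]; group
      _ = ⁅g, x⁆ * ⁅g, y⁆ := by rw [hy, mul_inv_cancel_right]

@[simp]
theorem commutatorElementHom_apply (hG : commutator G ≤ center G) (g x : G) :
    commutatorElementHom hG g x = ⁅g, x⁆ :=
  rfl

theorem center_le_ker_commutatorElementHom (hG : commutator G ≤ center G) (g : G) :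
    center G ≤ (commutatorElementHom hG g).ker := fun _ hz ↦
  commutatorElement_eq_one_iff_commute.mpr (mem_center_iff.mp hz g)

theorem centralizer_singleton_eq_zpowers_sup_center (hG : commutator G ≤ center G) {g s u : G}
    (hgen : closure ({g, s, u} : Set G) = ⊤)
    (hdisj : Disjoint (zpowers ⁅g, s⁆) (zpowers ⁅g, u⁆))
    (hs : orderOf (s : G ⧸ center G) ∣ orderOf ⁅g, s⁆)
    (hu : orderOf (u : G ⧸ center G) ∣ orderOf ⁅g, u⁆) :
    centralizer {g} = zpowers g ⊔ center G := by
  refine le_antisymm (fun x hx ↦ ?_) (sup_le ?_ (center_le_centralizer _))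
  · obtain ⟨i, j, k, hx'⟩ := QuotientGroup.exists_zpow_mul_zpow_mul_zpow_eq hG hgen x
    have hcomm : ⁅g, s⁆ ^ j * ⁅g, u⁆ ^ k = 1 := by
      have := congrArg (QuotientGroup.lift _ _ (center_le_ker_commutatorElementHom hG g)) hx'
      simpa [commutatorElement_eq_one_iff_commute.mpr
        (mem_centralizer_singleton_iff.mp hx : Commute x g).symm] using this
    obtain ⟨hj, hk⟩ := disjoint_iff_mul_eq_one.mp hdisj (zpow_mem_zpowers _ j)
      (zpow_mem_zpowers _ k) hcomm
    have hsj : (s : G ⧸ center G) ^ j = 1 := orderOf_dvd_iff_zpow_eq_one.mp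
      ((Int.natCast_dvd_natCast.mpr hs).trans (orderOf_dvd_iff_zpow_eq_one.mpr hj))
    have huk : (u : G ⧸ center G) ^ k = 1 := orderOf_dvd_iff_zpow_eq_one.mp
      ((Int.natCast_dvd_natCast.mpr hu).trans (orderOf_dvd_iff_zpow_eq_one.mpr hk))
    rw [sup_comm, ← QuotientGroup.comap_map_mk', mem_comap, MonoidHom.map_zpowers]
    refine mem_zpowers_iff.mpr ⟨i, ?_⟩
    simpa [hsj, huk] using hx'
  · exact zpowers_le.mpr (mem_centralizer_singleton_iff.mpr rfl)

end ClassTwo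

theorem stmt_9_general {G : Type*} [Group G] [Finite G] (p t : ℕ)
    (a b c : G)
    (hgen : Subgroup.closure ({a, b, c} : Set G) = ⊤)
    (hZ : commutator G = Subgroup.center G)
    (hjoin : commutator G
        = Subgroup.zpowers ⁅a, b⁆ ⊔ Subgroup.zpowers ⁅a, c⁆ ⊔ Subgroup.zpowers ⁅b, c⁆)
    (ho1 : orderOf ⁅a, b⁆ = p ^ t) (ho2 : orderOf ⁅a, c⁆ = p ^ t)
    (ho3 : orderOf ⁅b, c⁆ = p ^ t)
    (hcard : Nat.card (commutator G) = p ^ (3 * t))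
    (hqa : orderOf ((a : G ⧸ Subgroup.center G)) = p ^ t)
    (hqb : orderOf ((b : G ⧸ Subgroup.center G)) = p ^ t)
    (hqc : orderOf ((c : G ⧸ Subgroup.center G)) = p ^ t) :
    ∀ g ∈ ({a, b, c} : Set G),
      Subgroup.centralizer {g} = Subgroup.zpowers g ⊔ Subgroup.center G := by
  have hG : commutator G ≤ center G := hZ.le
  have hcentral (x y : G) (K : Subgroup G) : zpowers ⁅x, y⁆ ≤ centralizer K :=
    (zpowers_le.mpr (commutatorElement_mem_center hG x y)).trans (center_le_centralizer _)
  obtain ⟨hab_ac, hab_bc, hac_bc⟩ :=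
    disjoint_of_card_sup_sup_eq_mul_mul (hcentral a b _) (hcentral a b _) (hcentral a c _) <| by
      rw [← hjoin, hcard, Nat.card_zpowers, Nat.card_zpowers, Nat.card_zpowers, ho1, ho2, ho3]
      ring
  rintro g (rfl | rfl | rfl)
  · exact centralizer_singleton_eq_zpowers_sup_center hG hgen hab_ac
      (hqb.trans ho1.symm).dvd (hqc.trans ho2.symm).dvd
  · refine centralizer_singleton_eq_zpowers_sup_center hG (s := a) (u := c)
      (by rwa [Set.insert_comm]) ?_ ?_ (hqc.trans ho3.symm).dvd
    · rwa [← commutatorElement_inv, zpowers_inv]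
    · rw [← commutatorElement_inv, orderOf_inv, hqa, ho1]
  · refine centralizer_singleton_eq_zpowers_sup_center hG (s := a) (u := b)
      (by rwa [Set.insert_comm, Set.pair_comm]) ?_ ?_ ?_
    · rwa [← commutatorElement_inv, ← commutatorElement_inv b, zpowers_inv, zpowers_inv]
    · rw [← commutatorElement_inv, orderOf_inv, hqa, ho2]
    · rw [← commutatorElement_inv, orderOf_inv, hqb, ho3]

/-- Let `G` be a finite `p`-group of class 2 with `G = ⟨a,b,c⟩`,
`G' = ⟨⁅a,b⁆⟩ × ⟨⁅a,c⁆⟩ × ⟨⁅b,c⁆⟩` with each factor of order `p^t`, `G' = Z(G)`, and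
`G/Z(G) = ⟨aZ⟩ × ⟨bZ⟩ × ⟨cZ⟩` with each factor of order `p^t`.  Then for each
`g ∈ {a,b,c}` one has `C_G(g) = ⟨g⟩·Z(G)`. -/
theorem stmt_9 {G : Type*} [Group G] [Finite G] (p t : ℕ) (hp : p.Prime)
    (hpG : IsPGroup p G) (a b c : G)
    (hgen : Subgroup.closure ({a, b, c} : Set G) = ⊤)
    (hZ : commutator G = Subgroup.center G)
    (hjoin : commutator G
        = Subgroup.zpowers ⁅a, b⁆ ⊔ Subgroup.zpowers ⁅a, c⁆ ⊔ Subgroup.zpowers ⁅b, c⁆)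
    (ho1 : orderOf ⁅a, b⁆ = p ^ t) (ho2 : orderOf ⁅a, c⁆ = p ^ t)
    (ho3 : orderOf ⁅b, c⁆ = p ^ t)
    (hcard : Nat.card (commutator G) = p ^ (3 * t))
    (hqa : orderOf ((a : G ⧸ Subgroup.center G)) = p ^ t)
    (hqb : orderOf ((b : G ⧸ Subgroup.center G)) = p ^ t)
    (hqc : orderOf ((c : G ⧸ Subgroup.center G)) = p ^ t)
    (hqcard : Nat.card (G ⧸ Subgroup.center G) = p ^ (3 * t)) :
    ∀ g ∈ ({a, b, c} : Set G),
      Subgroup.centralizer {g} = Subgroup.zpowers g ⊔ Subgroup.center G :=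
  stmt_9_general p t a b c hgen hZ hjoin ho1 ho2 ho3 hcard hqa hqb hqc
end

section
/- In a group G of class 2 with exp(G') dividing p^t and exp(G) = p^{r+t}, suppose a^{p^r·m}·b^{p^r·n}·c^{p^r·l} = 1 implies p^t divides m, n, l whenever a,b,c generate G with G/Z(G) of type (p^t, p^t, p^t). Then ⟨a^{p^r}, b^{p^r}, c^{p^r}⟩ is the internal direct product ⟨a^{p^r}⟩ × ⟨b^{p^r}⟩ × ⟨c^{p^r}⟩, each factor cyclic of order p^t. -/
/-!
Since `G` has class 2, `⁅x ^ n, y⁆ = ⁅x, y⁆ ^ n`, and every commutator is central, hence killed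
by `p ^ r`. So `A = a ^ p ^ r`, `B = b ^ p ^ r`, `C = c ^ p ^ r` are central, in particular pairwise
commuting, and they have order `p ^ t`. For pairwise commuting `A, B, C` with `A ^ n = B ^ n =
C ^ n = 1`, the map `(i, j, k) ↦ A ^ i * B ^ j * C ^ k` from `(ZMod n)³` onto `⟨A, B, C⟩` is
well defined, and the hypothesis on `a, b, c` says exactly that it is injective.
-/

open scoped commutatorElement

open Subgroup

section Pow

variable {G : Type*} [Group G] {x y : G}

theorem commutatorElement_pow_left (h : Commute ⁅x, y⁆ x) (n : ℕ) :
    ⁅x ^ n, y⁆ = ⁅x, y⁆ ^ n := by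
  induction n with
  | zero => simp
  | succ n ih =>
    calc ⁅x ^ (n + 1), y⁆ = x * ⁅x ^ n, y⁆ * x⁻¹ * ⁅x, y⁆ := by
          simp only [commutatorElement_def]; group
      _ = ⁅x, y⁆ ^ (n + 1) := by
          rw [ih, ← (h.pow_left n).eq, mul_inv_cancel_right, ← pow_succ]

theorem Commute.pow_left_of_commutatorElement_pow_eq_one (h : Commute ⁅x, y⁆ x) {n : ℕ}
    (hn : ⁅x, y⁆ ^ n = 1) : Commute (x ^ n) y := by
  rw [← commutatorElement_eq_one_iff_commute, commutatorElement_pow_left h, hn]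

theorem zpow_emod_of_pow_eq_one {n : ℕ} (h : x ^ n = 1) (k : ℤ) : x ^ (k % n) = x ^ k :=
  zpow_eq_zpow_iff_modEq.2 <|
    (Int.mod_modEq k n).of_dvd (Int.natCast_dvd_natCast.2 (orderOf_dvd_of_pow_eq_one h))

end Pow

section Triple

variable {G : Type*} [Group G] {A B C : G}

def Commute.zpowTripleHom (hAB : Commute A B) (hAC : Commute A C) (hBC : Commute B C) :
    Multiplicative ℤ × Multiplicative ℤ × Multiplicative ℤ →* G :=
  (zpowersHom G A).noncommCoprod ((zpowersHom G B).noncommCoprod (zpowersHom G C)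
    fun _ _ => hBC.zpow_zpow _ _) fun _ _ => (hAB.zpow_zpow _ _).mul_right (hAC.zpow_zpow _ _)

theorem Commute.zpowTripleHom_apply (hAB : Commute A B) (hAC : Commute A C) (hBC : Commute B C)
    (i j k : ℤ) :
    hAB.zpowTripleHom hAC hBC (.ofAdd i, .ofAdd j, .ofAdd k) = A ^ i * B ^ j * C ^ k :=
  (mul_assoc _ _ _).symm

theorem Commute.range_zpowTripleHom (hAB : Commute A B) (hAC : Commute A C) (hBC : Commute B C) :
    (hAB.zpowTripleHom hAC hBC).range = closure {A, B, C} := by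
  apply le_antisymm
  · rintro _ ⟨⟨i, j, k⟩, rfl⟩
    rw [← ofAdd_toAdd i, ← ofAdd_toAdd j, ← ofAdd_toAdd k, zpowTripleHom_apply]
    exact mul_mem (mul_mem (zpow_mem (subset_closure (by simp)) _)
      (zpow_mem (subset_closure (by simp)) _)) (zpow_mem (subset_closure (by simp)) _)
  · rw [closure_le]
    rintro g (rfl | rfl | rfl)
    · exact ⟨_, (hAB.zpowTripleHom_apply hAC hBC 1 0 0).trans (by simp)⟩
    · exact ⟨_, (hAB.zpowTripleHom_apply hAC hBC 0 1 0).trans (by simp)⟩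
    · exact ⟨_, (hAB.zpowTripleHom_apply hAC hBC 0 0 1).trans (by simp)⟩

theorem Commute.card_closure_triple (hAB : Commute A B) (hAC : Commute A C) (hBC : Commute B C)
    {n : ℕ} [NeZero n] (hA : A ^ n = 1) (hB : B ^ n = 1) (hC : C ^ n = 1)
    (hind : ∀ i j k : ℤ, A ^ i * B ^ j * C ^ k = 1 → (n : ℤ) ∣ i ∧ (n : ℤ) ∣ j ∧ (n : ℤ) ∣ k) :
    Nat.card (closure ({A, B, C} : Set G)) = n ^ 3 := by
  set φ := hAB.zpowTripleHom hAC hBC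
  let lift (x : ZMod n × ZMod n × ZMod n) :
      Multiplicative ℤ × Multiplicative ℤ × Multiplicative ℤ :=
    (.ofAdd x.1.val, .ofAdd x.2.1.val, .ofAdd x.2.2.val)
  have hrange : Set.range (φ ∘ lift) = closure {A, B, C} := by
    rw [← hAB.range_zpowTripleHom hAC hBC, MonoidHom.coe_range]
    refine (Set.range_comp_subset_range _ _).antisymm ?_
    rintro _ ⟨⟨i, j, k⟩, rfl⟩
    refine ⟨((i.toAdd : ZMod n), (j.toAdd : ZMod n), (k.toAdd : ZMod n)), ?_⟩
    simp only [Function.comp_apply, lift, φ, zpowTripleHom_apply, ZMod.val_intCast,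
      zpow_emod_of_pow_eq_one hA, zpow_emod_of_pow_eq_one hB, zpow_emod_of_pow_eq_one hC]
    exact (hAB.zpowTripleHom_apply hAC hBC _ _ _).symm
  have eq_of_dvd (u w : ZMod n) (h : (n : ℤ) ∣ (u.val : ℤ) - w.val) : u = w := by
    simpa using ((ZMod.intCast_eq_intCast_iff_dvd_sub _ _ n).2 h).symm
  have hinj : Function.Injective (φ ∘ lift) := by
    intro u w h
    have h1 : φ (lift u / lift w) = 1 := by
      rw [map_div, div_eq_one]
      exact h
    obtain ⟨d₁, d₂, d₃⟩ := hind _ _ _ ((hAB.zpowTripleHom_apply hAC hBC _ _ _).symm.trans h1)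
    exact Prod.ext (eq_of_dvd _ _ d₁) (Prod.ext (eq_of_dvd _ _ d₂) (eq_of_dvd _ _ d₃))
  rw [← SetLike.coe_sort_coe, ← hrange, Nat.card_range_of_injective hinj,
    Nat.card_prod, Nat.card_prod, Nat.card_zmod]
  ring

end Triple

theorem stmt_15_general {G : Type*} [Group G] (p r t : ℕ) (hp : p.Prime)
    (hclass : commutator G ≤ Subgroup.center G)
    (a b c : G)
    (hoa : orderOf a = p ^ (r + t)) (hob : orderOf b = p ^ (r + t))
    (hoc : orderOf c = p ^ (r + t))
    (hΩ : ∀ x : G, x ∈ Subgroup.center G ↔ x ^ p ^ r = 1)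
    (hkey : ∀ m n l : ℤ, a ^ ((p : ℤ) ^ r * m) * b ^ ((p : ℤ) ^ r * n)
        * c ^ ((p : ℤ) ^ r * l) = 1 →
        ((p : ℤ) ^ t ∣ m ∧ (p : ℤ) ^ t ∣ n ∧ (p : ℤ) ^ t ∣ l)) :
    orderOf (a ^ p ^ r) = p ^ t ∧ orderOf (b ^ p ^ r) = p ^ t ∧
      orderOf (c ^ p ^ r) = p ^ t ∧
      Nat.card (Subgroup.closure ({a ^ p ^ r, b ^ p ^ r, c ^ p ^ r} : Set G))
        = p ^ (3 * t) := by
  have horder (x : G) (hx : orderOf x = p ^ (r + t)) : orderOf (x ^ p ^ r) = p ^ t := by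
    rw [orderOf_pow_of_dvd (pow_ne_zero r hp.ne_zero) (hx ▸ pow_dvd_pow p (r.le_add_right t)),
      hx, pow_add, Nat.mul_div_cancel_left _ (pow_pos hp.pos r)]
  have hcomm (x y : G) : Commute (x ^ p ^ r) y := by
    have hz : ⁅x, y⁆ ∈ center G := hclass (commutator_mem_commutator (mem_top x) (mem_top y))
    exact .pow_left_of_commutatorElement_pow_eq_one (mem_center_iff.1 hz x).symm ((hΩ _).1 hz)
  have : NeZero (p ^ t) := ⟨pow_ne_zero t hp.ne_zero⟩
  refine ⟨horder a hoa, horder b hob, horder c hoc, ?_⟩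
  rw [mul_comm, pow_mul]
  refine (hcomm a _).card_closure_triple (hcomm a _) (hcomm b _) ?_ ?_ ?_ fun i j k h => ?_
  · exact horder a hoa ▸ pow_orderOf_eq_one _
  · exact horder b hob ▸ pow_orderOf_eq_one _
  · exact horder c hoc ▸ pow_orderOf_eq_one _
  · exact_mod_cast hkey i j k (by simpa only [zpow_mul, ← Nat.cast_pow, zpow_natCast] using h)

/-- In a finite `p`-group `G` of class 2 generated by `a, b, c`, each of order `p^{r+t}`,
with `exp(G') ∣ p^t`, `exp(G) = p^{r+t}`, `Z(G) = Ω_r(G)`, and `G/Z(G)` of type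
`(p^t, p^t, p^t)`: if `a^{p^r m} b^{p^r n} c^{p^r l} = 1` implies `p^t ∣ m, n, l`, then
`⟨a^{p^r}, b^{p^r}, c^{p^r}⟩ = ⟨a^{p^r}⟩ × ⟨b^{p^r}⟩ × ⟨c^{p^r}⟩` with each factor cyclic
of order `p^t`. -/
theorem stmt_15 {G : Type*} [Group G] [Finite G] (p r t : ℕ) (hp : p.Prime)
    (hpG : IsPGroup p G) (hclass : commutator G ≤ Subgroup.center G)
    (a b c : G) (hgen : Subgroup.closure ({a, b, c} : Set G) = ⊤)
    (hoa : orderOf a = p ^ (r + t)) (hob : orderOf b = p ^ (r + t))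
    (hoc : orderOf c = p ^ (r + t))
    (hexpG' : Monoid.exponent (commutator G) ∣ p ^ t)
    (hexpG : Monoid.exponent G = p ^ (r + t))
    (hΩ : ∀ x : G, x ∈ Subgroup.center G ↔ x ^ p ^ r = 1)
    (hqa : orderOf ((a : G ⧸ Subgroup.center G)) = p ^ t)
    (hqb : orderOf ((b : G ⧸ Subgroup.center G)) = p ^ t)
    (hqc : orderOf ((c : G ⧸ Subgroup.center G)) = p ^ t)
    (hqcard : Nat.card (G ⧸ Subgroup.center G) = p ^ (3 * t))
    (hkey : ∀ m n l : ℤ, a ^ ((p : ℤ) ^ r * m) * b ^ ((p : ℤ) ^ r * n)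
        * c ^ ((p : ℤ) ^ r * l) = 1 →
        ((p : ℤ) ^ t ∣ m ∧ (p : ℤ) ^ t ∣ n ∧ (p : ℤ) ^ t ∣ l)) :
    orderOf (a ^ p ^ r) = p ^ t ∧ orderOf (b ^ p ^ r) = p ^ t ∧
      orderOf (c ^ p ^ r) = p ^ t ∧
      Nat.card (Subgroup.closure ({a ^ p ^ r, b ^ p ^ r, c ^ p ^ r} : Set G))
        = p ^ (3 * t) :=
  stmt_15_general p r t hp hclass a b c hoa hob hoc hΩ hkey
end
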